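/- For n ≥ 4, if G and its complement are both connected graphs on n = 4 vertices, then tpc(G) + tpc(complement of G) = 6. -/

import Mathlib

/-- Interleave two lists, starting with the first. -/
def List.interleaveTPC {α : Type*} : List α → List α → List α
  | [], ys => ys
  | x :: xs, ys => x :: List.interleaveTPC ys xs
termination_by xs ys => xs.length + ys.length

namespace SimpleGraph

variable {V : Type*} {α : Type*} {G : SimpleGraph V}

/-- The sequence of colors `cE e₀, cV v₁, cE e₁, cV v₂, …, cE e_{m-1}` of the edges and
internal vertices of a walk, in order. -/
def Walk.totalColorSeq (cV : V → α) (cE : Sym2 V → α) {u v : V} (p : G.Walk u v) : List α :=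
  (p.edges.map cE).interleaveTPC (p.support.tail.dropLast.map cV)

/-- A walk is total-proper if in its color sequence, any two entries at distance 1 or 2
are distinct.  This says exactly that adjacent edges get distinct colors, adjacent internal
vertices get distinct colors, and every internal vertex gets a color distinct from those of
its incident edges on the walk. -/
def Walk.IsTotalProper (cV : V → α) (cE : Sym2 V → α) {u v : V} (p : G.Walk u v) : Prop :=
  ∀ i a b, (p.totalColorSeq cV cE)[i]? = some a →
    ((p.totalColorSeq cV cE)[i + 1]? = some b ∨ (p.totalColorSeq cV cE)[i + 2]? = some b) →
    a ≠ b

/-- A total coloring (given by a vertex coloring `cV` and an edge coloring `cE`) makes `G`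
total-proper connected if every two distinct vertices are joined by a total-proper path. -/
def IsTPCColoring (G : SimpleGraph V) (cV : V → α) (cE : Sym2 V → α) : Prop :=
  ∀ u v : V, u ≠ v → ∃ p : G.Walk u v, p.IsPath ∧ p.IsTotalProper cV cE

/-- The total-proper connection number: the minimum number of colors in a total coloring
making `G` total-proper connected. -/
noncomputable def tpc (G : SimpleGraph V) : ℕ :=
  sInf {k | ∃ (cV : V → Fin k) (cE : Sym2 V → Fin k), G.IsTPCColoring cV cE}

end SimpleGraph


/-!
Any total-proper path with at least two edges shows three distinct colours at its start (first
edge, first internal vertex, second edge), so a graph with two distinct non-adjacent vertices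
needs at least three colours. On four vertices, `G` and `Gᶜ` are both connected only when `G` is
the path `P₄` (checked by enumerating all 64 graphs on `Fin 4`), and `P₄` is total-proper
connected with three colours. Since `Gᶜ` satisfies the same hypotheses, `tpc G = tpc Gᶜ = 3`.
-/

theorem List.interleaveTPC_eq_interleave {α : Type*} :
    ∀ xs ys : List α, xs.interleaveTPC ys = xs.interleave ys
  | [], ys => by rw [interleaveTPC, nil_interleave]
  | x :: xs, ys => by rw [interleaveTPC, cons_interleave, interleaveTPC_eq_interleave ys xs]
termination_by xs ys => xs.length + ys.length

namespace SimpleGraph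

variable {V W α : Type*} {G : SimpleGraph V} {G' : SimpleGraph W} {u v : V}
  {cV : V → α} {cE : Sym2 V → α}

namespace Walk

theorem length_totalColorSeq (cV : V → α) (cE : Sym2 V → α) (p : G.Walk u v) :
    (p.totalColorSeq cV cE).length = 2 * p.length - 1 := by
  simp only [totalColorSeq, List.interleaveTPC_eq_interleave, List.length_interleave,
    List.length_map, length_edges, List.length_dropLast, List.length_tail, length_support]
  omega

theorem isTotalProper_iff (cV : V → α) (cE : Sym2 V → α) (p : G.Walk u v) :
    p.IsTotalProper cV cE ↔ ∀ i < (p.totalColorSeq cV cE).length,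
      (p.totalColorSeq cV cE)[i]? ≠ (p.totalColorSeq cV cE)[i + 1]? ∧
      (p.totalColorSeq cV cE)[i]? ≠ (p.totalColorSeq cV cE)[i + 2]? := by
  constructor
  · intro h i hi
    have ha := List.getElem?_eq_getElem hi
    exact ⟨fun he => h i _ _ ha (.inl (he ▸ ha)) rfl, fun he => h i _ _ ha (.inr (he ▸ ha)) rfl⟩
  · rintro h i a b ha hb rfl
    have hi := (List.getElem?_eq_some_iff.mp ha).1
    rcases hb with hb | hb
    · exact (h i hi).1 (ha.trans hb.symm)
    · exact (h i hi).2 (ha.trans hb.symm)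

instance [DecidableEq α] (cV : V → α) (cE : Sym2 V → α) (p : G.Walk u v) :
    Decidable (p.IsTotalProper cV cE) :=
  decidable_of_iff' _ (isTotalProper_iff cV cE p)

theorem totalColorSeq_map (f : G →g G') (cV : W → α) (cE : Sym2 W → α) (p : G.Walk u v) :
    (p.map f).totalColorSeq cV cE = p.totalColorSeq (cV ∘ f) (cE ∘ Sym2.map f) := by
  rw [totalColorSeq, totalColorSeq, edges_map, support_map, ← List.map_tail,
    ← List.map_dropLast, List.map_map, List.map_map]

theorem isTotalProper_map (f : G →g G') (cV : W → α) (cE : Sym2 W → α) (p : G.Walk u v) :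
    (p.map f).IsTotalProper cV cE ↔ p.IsTotalProper (cV ∘ f) (cE ∘ Sym2.map f) := by
  rw [IsTotalProper, IsTotalProper, totalColorSeq_map]

theorem isTotalProper_copy {u' v' : V} (p : G.Walk u v) (hu : u = u') (hv : v = v') :
    (p.copy hu hv).IsTotalProper cV cE ↔ p.IsTotalProper cV cE := by
  subst hu hv
  rfl

theorem IsTotalProper.three_le_card [Fintype α] {p : G.Walk u v}
    (hp : p.IsTotalProper cV cE) (hlen : 2 ≤ p.length) : 3 ≤ Fintype.card α := by
  classical
  have hseq := (p.isTotalProper_iff cV cE).mp hp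
  have hl := p.length_totalColorSeq cV cE
  generalize p.totalColorSeq cV cE = l at hseq hl
  rcases l with _ | ⟨a, _ | ⟨b, _ | ⟨c, t⟩⟩⟩ <;>
    simp only [List.length_cons, List.length_nil] at hl <;> try omega
  have h0 := hseq 0 (by simp)
  have h1 := hseq 1 (by simp)
  simp only [List.getElem?_cons_zero, List.getElem?_cons_succ, ne_eq, Option.some.injEq] at h0 h1
  calc 3 = ({a, b, c} : Finset α).card :=
        (Finset.card_eq_three.mpr ⟨a, b, c, h0.1, h0.2, h1.1, rfl⟩).symm
    _ ≤ Fintype.card α := Finset.card_le_univ _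

end Walk

theorem IsTPCColoring.three_le_card [Fintype α] (h : G.IsTPCColoring cV cE) (huv : u ≠ v)
    (hnadj : ¬G.Adj u v) : 3 ≤ Fintype.card α := by
  obtain ⟨p, -, hp⟩ := h u v huv
  refine hp.three_le_card ?_
  by_contra! hlen
  obtain hl | hl : p.length = 0 ∨ p.length = 1 := by omega
  · exact huv (p.eq_of_length_eq_zero hl)
  · exact hnadj (p.adj_of_length_eq_one hl)

theorem IsTPCColoring.comap_iso (e : G ≃g G') {cV : W → α} {cE : Sym2 W → α}
    (h : G'.IsTPCColoring cV cE) : G.IsTPCColoring (cV ∘ e) (cE ∘ Sym2.map e) := by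
  intro u v huv
  obtain ⟨p, hp, hprop⟩ := h (e u) (e v) (e.injective.ne huv)
  refine ⟨(p.map e.symm.toHom).copy (e.symm_apply_apply u) (e.symm_apply_apply v), ?_, ?_⟩
  · rw [Walk.isPath_copy]
    exact hp.map e.symm.injective
  · rw [Walk.isTotalProper_copy, Walk.isTotalProper_map]
    convert hprop using 1
    · ext x
      simp
    · ext s
      induction s using Sym2.ind
      simp

/-- Paths are phrased through `support.Nodup` because the library's decision procedure for
`IsPath` rewrites with `propext`, which blocks kernel reduction. -/
theorem isTPCColoring_iff_exists_short_walk [Fintype V] (cV : V → α) (cE : Sym2 V → α) :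
    G.IsTPCColoring cV cE ↔ ∀ u v, u ≠ v →
      ∃ p : {p : G.Walk u v // p.length < Fintype.card V},
        p.1.support.Nodup ∧ p.1.IsTotalProper cV cE :=
  forall₂_congr fun _ _ => imp_congr_right fun _ =>
    ⟨fun ⟨p, hp, h⟩ => ⟨⟨p, hp.length_lt⟩, hp.support_nodup, h⟩,
      fun ⟨p, hp, h⟩ => ⟨p.1, Walk.IsPath.mk' hp, h⟩⟩

instance [Fintype V] [DecidableEq V] [DecidableRel G.Adj] [DecidableEq α]
    (cV : V → α) (cE : Sym2 V → α) : Decidable (G.IsTPCColoring cV cE) :=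
  decidable_of_iff' _ (isTPCColoring_iff_exists_short_walk cV cE)

theorem tpc_le {k : ℕ} {cV : V → Fin k} {cE : Sym2 V → Fin k} (h : G.IsTPCColoring cV cE) :
    G.tpc ≤ k :=
  Nat.sInf_le ⟨cV, cE, h⟩

theorem exists_isTPCColoring_tpc {k : ℕ} {cV : V → Fin k} {cE : Sym2 V → Fin k}
    (h : G.IsTPCColoring cV cE) :
    ∃ (cV' : V → Fin G.tpc) (cE' : Sym2 V → Fin G.tpc), G.IsTPCColoring cV' cE' :=
  Nat.sInf_mem (s := {k | ∃ (cV : V → Fin k) (cE : Sym2 V → Fin k), G.IsTPCColoring cV cE})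
    ⟨k, cV, cE, h⟩

theorem tpc_congr (e : G ≃g G') : G.tpc = G'.tpc := by
  unfold tpc
  congr 1
  ext k
  exact ⟨fun ⟨_, _, h⟩ => ⟨_, _, h.comap_iso e.symm⟩, fun ⟨_, _, h⟩ => ⟨_, _, h.comap_iso e⟩⟩

theorem tpc_eq_three {cV : V → Fin 3} {cE : Sym2 V → Fin 3} (h : G.IsTPCColoring cV cE)
    (huv : u ≠ v) (hnadj : ¬G.Adj u v) : G.tpc = 3 := by
  obtain ⟨_, _, hmin⟩ := exists_isTPCColoring_tpc h
  exact le_antisymm (tpc_le h) (by simpa using hmin.three_le_card huv hnadj)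

instance (n : ℕ) : DecidableRel (pathGraph n).Adj := fun _ _ =>
  decidable_of_iff' _ pathGraph_adj

/-! Along `0 - 1 - 2 - 3` the colour sequence is `e₀₁, v₁, e₁₂, v₂, e₂₃`; every entry is coloured
by its position in that sequence modulo 3 (vertex `i` sits at `2i - 1`, edge `{a, b}` at
`a + b - 1`). -/

def pathColorV : Fin 4 → Fin 3 := fun i => Fin.ofNat 3 (2 * i.val + 2)

def pathColorE : Sym2 (Fin 4) → Fin 3 :=
  Sym2.lift ⟨fun a b => Fin.ofNat 3 (a.val + b.val + 2),
    fun a b => congrArg (Fin.ofNat 3) (by omega)⟩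

-- `+kernel`: `List.interleaveTPC` is defined by well-founded recursion, which `decide` will not
-- unfold.
theorem pathGraph_four_isTPCColoring : (pathGraph 4).IsTPCColoring pathColorV pathColorE := by
  decide +kernel

theorem tpc_pathGraph_four : (pathGraph 4).tpc = 3 :=
  tpc_eq_three pathGraph_four_isTPCColoring (u := 0) (v := 2) (by decide) (by decide)

def Iso.compl (e : G ≃g G') : Gᶜ ≃g G'ᶜ :=
  ⟨e.toEquiv, (Embedding.complEquiv e.toEmbedding).map_rel_iff'⟩

/-! A graph on `Fin 4` is encoded by the bits saying which of the six pairs are edges, so that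
`decide` can run through all of them. -/

def edgeBitPairs : Fin 6 → Fin 4 × Fin 4 := ![(0, 1), (0, 2), (0, 3), (1, 2), (1, 3), (2, 3)]

def ofEdgeBits (b : Fin 6 → Bool) : SimpleGraph (Fin 4) :=
  fromRel fun x y => ∃ i, b i ∧ edgeBitPairs i = (x, y)

instance (b : Fin 6 → Bool) : DecidableRel (ofEdgeBits b).Adj := fun _ _ =>
  decidable_of_iff' _ (fromRel_adj ..)

theorem eq_ofEdgeBits (H : SimpleGraph (Fin 4)) [DecidableRel H.Adj] :
    H = ofEdgeBits fun i => H.Adj (edgeBitPairs i).1 (edgeBitPairs i).2 := by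
  have hpairs : ∀ x y : Fin 4, x ≠ y →
      ∃ i, edgeBitPairs i = (x, y) ∨ edgeBitPairs i = (y, x) := by
    decide
  ext x y
  simp only [ofEdgeBits, fromRel_adj, decide_eq_true_eq]
  constructor
  · intro h
    obtain ⟨i, hi | hi⟩ := hpairs x y h.ne
    · exact ⟨h.ne, .inl ⟨i, by simpa [hi] using h, hi⟩⟩
    · exact ⟨h.ne, .inr ⟨i, by simpa [hi] using h.symm, hi⟩⟩
  · rintro ⟨-, ⟨i, hi, hxy⟩ | ⟨i, hi, hxy⟩⟩
    · simpa [hxy] using hi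
    · simpa [hxy] using hi.symm

theorem ofEdgeBits_iso_pathGraph_four : ∀ b : Fin 6 → Bool,
    (ofEdgeBits b).Connected → (ofEdgeBits b)ᶜ.Connected →
      ∃ σ : Equiv.Perm (Fin 4), ∀ x y, (pathGraph 4).Adj (σ x) (σ y) ↔ (ofEdgeBits b).Adj x y := by
  decide +kernel

theorem nonempty_iso_pathGraph_four [Fintype V] (h4 : Fintype.card V = 4) (hG : G.Connected)
    (hGc : Gᶜ.Connected) : Nonempty (G ≃g pathGraph 4) := by
  classical
  let H := G.map (Fintype.equivFinOfCardEq h4).toEmbedding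
  have eH : G ≃g H := Iso.map _ G
  obtain ⟨σ, hσ⟩ := ofEdgeBits_iso_pathGraph_four _
    (eq_ofEdgeBits H ▸ eH.connected_iff.mp hG) (eq_ofEdgeBits H ▸ eH.compl.connected_iff.mp hGc)
  exact ⟨eH.trans (eq_ofEdgeBits H ▸ ⟨σ, hσ _ _⟩)⟩

end SimpleGraph

open SimpleGraph in
theorem tpc_add_tpc_compl_four {V : Type*} [Fintype V]
    (h4 : Fintype.card V = 4) (G : SimpleGraph V) (hG : G.Connected)
    (hGc : Gᶜ.Connected) : G.tpc + Gᶜ.tpc = 6 := by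
  obtain ⟨e⟩ := nonempty_iso_pathGraph_four h4 hG hGc
  obtain ⟨ec⟩ := nonempty_iso_pathGraph_four h4 hGc (by rwa [compl_compl])
  rw [tpc_congr e, tpc_congr ec, tpc_pathGraph_four]
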